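/- arXiv:2310.09591 — 6 statements merged into one kernel-verified Lean document; each statement's English description precedes it below -/
import Mathlib

section
/- The map ι sending f(t) + s·g(t) to the 2×2 matrix [[f(z), g*(z)], [g(z), f*(z)]], where h*(z) = h(1/z), defines an injective K-algebra homomorphism from the group algebra K D∞ (presented as K⟨s, t | s² = 1, ts = st⁻¹⟩) into the 2×2 matrices over the Laurent polynomial ring K[t, t⁻¹]. -/
open LaurentPolynomial

noncomputable section StmtAux

variable (K : Type*) [Field K]

private noncomputable def phiFun :
    DihedralGroup 0 → Matrix (Fin 2) (Fin 2) (LaurentPolynomial K)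
  | .r n => !![T (n : ℤ), 0; 0, T (-(n : ℤ))]
  | .sr n => !![0, T (-(n : ℤ)); T (n : ℤ), 0]

private lemma phiFun_r (n : ZMod 0) :
    phiFun K (.r n) = !![T (n:ℤ), 0; 0, T (-(n:ℤ))] := rfl

private lemma phiFun_sr (n : ZMod 0) :
    phiFun K (.sr n) = !![0, T (-(n:ℤ)); T (n:ℤ), 0] := rfl

private lemma zmod_cast_add (i j : ZMod 0) :
    ((i + j : ZMod 0) : ℤ) = (i:ℤ) + (j:ℤ) := rfl
private lemma zmod_cast_sub (i j : ZMod 0) :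
    ((i - j : ZMod 0) : ℤ) = (i:ℤ) - (j:ℤ) := rfl
private lemma T_addZ (m n : ZMod 0) :
    (T (m + n : ZMod 0) : LaurentPolynomial K) = T m * T n := T_add _ _

private lemma phiFun_mul (g h : DihedralGroup 0) :
    phiFun K (g * h) = phiFun K g * phiFun K h := by
  cases g with
  | r i => cases h with
    | r j =>
      rw [DihedralGroup.r_mul_r, phiFun_r, phiFun_r, phiFun_r, zmod_cast_add,
        Matrix.mul_fin_two]
      simp only [mul_zero, zero_mul, add_zero, zero_add, ← T_add]
      ext a b : 1
      fin_cases a <;> fin_cases b <;>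
        simp only [Matrix.cons_val', Matrix.cons_val_zero, Matrix.cons_val_one,
          Matrix.head_cons, Matrix.empty_val', Matrix.cons_val_fin_one,
          Matrix.head_fin_const, Matrix.of_apply, Fin.zero_eta, Fin.mk_one] <;>
        first | rfl | exact T_add _ _ | (rw [← T_addZ]; congr 1; change (_ : ZMod 0) = _; ring) | (congr 1; ring_nf)
    | sr j =>
      rw [DihedralGroup.r_mul_sr, phiFun_sr, phiFun_r, phiFun_sr, zmod_cast_sub,
        Matrix.mul_fin_two]
      simp only [mul_zero, zero_mul, add_zero, zero_add, ← T_add]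
      ext a b : 1
      fin_cases a <;> fin_cases b <;>
        simp only [Matrix.cons_val', Matrix.cons_val_zero, Matrix.cons_val_one,
          Matrix.head_cons, Matrix.empty_val', Matrix.cons_val_fin_one,
          Matrix.head_fin_const, Matrix.of_apply, Fin.zero_eta, Fin.mk_one] <;>
        first | rfl | exact T_add _ _ | (rw [← T_addZ]; congr 1; change (_ : ZMod 0) = _; ring) | (congr 1; ring_nf)
  | sr i => cases h with
    | r j =>
      rw [DihedralGroup.sr_mul_r, phiFun_sr, phiFun_sr, phiFun_r, zmod_cast_add,
        Matrix.mul_fin_two]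
      simp only [mul_zero, zero_mul, add_zero, zero_add, ← T_add]
      ext a b : 1
      fin_cases a <;> fin_cases b <;>
        simp only [Matrix.cons_val', Matrix.cons_val_zero, Matrix.cons_val_one,
          Matrix.head_cons, Matrix.empty_val', Matrix.cons_val_fin_one,
          Matrix.head_fin_const, Matrix.of_apply, Fin.zero_eta, Fin.mk_one] <;>
        first | rfl | exact T_add _ _ | (rw [← T_addZ]; congr 1; change (_ : ZMod 0) = _; ring) | (congr 1; ring_nf)
    | sr j =>
      rw [DihedralGroup.sr_mul_sr, phiFun_r, phiFun_sr, phiFun_sr, zmod_cast_sub,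
        Matrix.mul_fin_two]
      simp only [mul_zero, zero_mul, add_zero, zero_add, ← T_add]
      ext a b : 1
      fin_cases a <;> fin_cases b <;>
        simp only [Matrix.cons_val', Matrix.cons_val_zero, Matrix.cons_val_one,
          Matrix.head_cons, Matrix.empty_val', Matrix.cons_val_fin_one,
          Matrix.head_fin_const, Matrix.of_apply, Fin.zero_eta, Fin.mk_one] <;>
        first | rfl | exact T_add _ _ | (rw [← T_addZ]; congr 1; change (_ : ZMod 0) = _; ring) | (congr 1; ring_nf)

private lemma phiFun_one : phiFun K 1 = 1 := by
  rw [DihedralGroup.one_def, phiFun_r]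
  ext i j : 1; fin_cases i <;> fin_cases j <;>
    simp [show ((0 : ZMod 0):ℤ) = 0 from rfl] <;> exact T_zero

private noncomputable def phiHom :
    DihedralGroup 0 →* Matrix (Fin 2) (Fin 2) (LaurentPolynomial K) where
  toFun := phiFun K
  map_one' := phiFun_one K
  map_mul' := phiFun_mul K

private lemma smul_T (a : K) (n : ℤ) :
    a • (T n : LaurentPolynomial K) = AddMonoidAlgebra.single n a := by
  rw [T, AddMonoidAlgebra.smul_single]; simp

private noncomputable def psi :
    Matrix (Fin 2) (Fin 2) (LaurentPolynomial K) →
      MonoidAlgebra K (DihedralGroup 0) :=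
  fun M => MonoidAlgebra.ofCoeff (Finsupp.mapDomain (DihedralGroup.r : ZMod 0 → DihedralGroup 0) (M 0 0).coeff) +
    MonoidAlgebra.ofCoeff (Finsupp.mapDomain (DihedralGroup.sr : ZMod 0 → DihedralGroup 0) (M 1 0).coeff)

private lemma psi_add (M N : Matrix (Fin 2) (Fin 2) (LaurentPolynomial K)) :
    psi K (M + N) = psi K M + psi K N := by
  unfold psi
  rw [Matrix.add_apply, Matrix.add_apply, AddMonoidAlgebra.coeff_add, AddMonoidAlgebra.coeff_add]
  erw [Finsupp.mapDomain_add, Finsupp.mapDomain_add, MonoidAlgebra.ofCoeff_add,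
    MonoidAlgebra.ofCoeff_add]
  abel

end StmtAux

open LaurentPolynomial in
theorem stmt_3 (K : Type*) [Field K] :
    ∃ ι : MonoidAlgebra K (DihedralGroup 0) →ₐ[K]
        Matrix (Fin 2) (Fin 2) (LaurentPolynomial K),
      Function.Injective ι ∧
      (∀ n : ZMod 0,
        ι (MonoidAlgebra.of K (DihedralGroup 0) (DihedralGroup.r n)) =
          !![T (n : ℤ), 0; 0, T (-(n : ℤ))]) ∧
      (∀ n : ZMod 0,
        ι (MonoidAlgebra.of K (DihedralGroup 0) (DihedralGroup.sr n)) =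
          !![0, T (-(n : ℤ)); T (n : ℤ), 0]) := by
  refine ⟨MonoidAlgebra.lift K _ (DihedralGroup 0) (phiHom K), ?_, ?_, ?_⟩
  · have hleft : Function.LeftInverse (psi K)
        (MonoidAlgebra.lift K _ (DihedralGroup 0) (phiHom K)) := by
      intro x
      induction x using MonoidAlgebra.induction_linear with
      | zero => simp [psi, Finsupp.mapDomain_zero];
                  erw [Finsupp.mapDomain_zero, MonoidAlgebra.ofCoeff_zero,
                    add_zero]
      | add f g hf hg =>
        rw [map_add, psi_add, hf, hg]
      | single g a =>
        show psi K ((MonoidAlgebra.lift K _ (DihedralGroup 0) (phiHom K))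
          (MonoidAlgebra.single g a)) = _
        rw [MonoidAlgebra.lift_single]
        cases g with
        | r n =>
          show psi K (a • phiFun K (.r n)) = _
          rw [phiFun_r]
          unfold psi
          rw [Matrix.smul_apply, Matrix.smul_apply]
          simp only [Matrix.cons_val', Matrix.cons_val_zero, Matrix.cons_val_one,
            Matrix.head_cons, Matrix.empty_val', Matrix.cons_val_fin_one,
            Matrix.head_fin_const, Matrix.of_apply]
          erw [smul_T, smul_zero, AddMonoidAlgebra.coeff_single, AddMonoidAlgebra.coeff_zero,
            Finsupp.mapDomain_single, Finsupp.mapDomain_zero, MonoidAlgebra.ofCoeff_single,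
            MonoidAlgebra.ofCoeff_zero, add_zero]
        | sr n =>
          show psi K (a • phiFun K (.sr n)) = _
          rw [phiFun_sr]
          unfold psi
          rw [Matrix.smul_apply, Matrix.smul_apply]
          simp only [Matrix.cons_val', Matrix.cons_val_zero, Matrix.cons_val_one,
            Matrix.head_cons, Matrix.empty_val', Matrix.cons_val_fin_one,
            Matrix.head_fin_const, Matrix.of_apply]
          erw [smul_T, smul_zero, AddMonoidAlgebra.coeff_single, AddMonoidAlgebra.coeff_zero,
            Finsupp.mapDomain_single, Finsupp.mapDomain_zero, MonoidAlgebra.ofCoeff_single,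
            MonoidAlgebra.ofCoeff_zero, zero_add]
    exact hleft.injective
  · intro n
    rw [MonoidAlgebra.lift_of]
    exact phiFun_r K n
  · intro n
    rw [MonoidAlgebra.lift_of]
    exact phiFun_sr K n
end

section
/- Let K be a field of characteristic not 2, R = K D∞, e = (1-a)/2 and e' = (1-b)/2. The four right R-modules eR, (1-e)R, e'R, (1-e')R are pairwise non-isomorphic. -/
open DihedralGroup

/-- The character of `D∞` sending `a = sr 0` to `ea` and `b = sr 1` to `eb`,
where `ea, eb` are square roots of 1. -/
def chiHom {K : Type*} [Field K] (ea eb : K) (ha : ea * ea = 1) (hb : eb * eb = 1) :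
    DihedralGroup 0 →* K where
  toFun g := match g with
    | .r i => (ea * eb) ^ (show ℤ from i)
    | .sr i => ea * (ea * eb) ^ (show ℤ from i)
  map_one' := by show (ea * eb) ^ (show ℤ from (0 : ZMod 0)) = 1; exact zpow_zero _
  map_mul' := by
    have hc : ea * eb ≠ 0 := by
      intro h
      have : (ea * eb) * (ea * eb) = 1 := by
        rw [mul_mul_mul_comm, ha, hb, one_mul]
      rw [h] at this; simp at this
    have hinv : (ea * eb)⁻¹ = ea * eb := by
      apply inv_eq_of_mul_eq_one_right
      rw [mul_mul_mul_comm, ha, hb, one_mul]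
    have hneg : ∀ i : ℤ, (ea * eb) ^ (-i) = (ea * eb) ^ i := by
      intro i; rw [zpow_neg, ← inv_zpow, hinv]
    rintro (i | i) (j | j) <;>
      simp only [r_mul_r, r_mul_sr, sr_mul_r, sr_mul_sr]
    · exact zpow_add₀ hc i j
    · show ea * (ea*eb) ^ ((show ℤ from j) - (show ℤ from i)) = (ea*eb) ^ (show ℤ from i) * (ea * (ea*eb) ^ (show ℤ from j))
      rw [sub_eq_add_neg, zpow_add₀ hc, hneg]
      ring
    · show ea * (ea*eb) ^ ((show ℤ from i) + (show ℤ from j)) = ea * (ea*eb) ^ (show ℤ from i) * ((ea*eb) ^ (show ℤ from j))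
      rw [zpow_add₀ hc]; ring
    · show (ea*eb) ^ ((show ℤ from j) - (show ℤ from i)) = ea * (ea*eb) ^ (show ℤ from i) * (ea * (ea*eb) ^ (show ℤ from j))
      rw [sub_eq_add_neg, zpow_add₀ hc, hneg,
        show ea * (ea*eb) ^ (show ℤ from i) * (ea * (ea*eb) ^ (show ℤ from j)) = (ea*ea) * ((ea*eb) ^ (show ℤ from i) * (ea*eb) ^ (show ℤ from j)) by ring, ha]
      ring

/-- The induced `K`-algebra map `K D∞ → K`. -/
noncomputable def chiAlg {K : Type*} [Field K] (ea eb : K) (ha : ea * ea = 1) (hb : eb * eb = 1) :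
    MonoidAlgebra K (DihedralGroup 0) →ₐ[K] K :=
  MonoidAlgebra.lift K K (DihedralGroup 0) (chiHom ea eb ha hb)

theorem chiAlg_a {K : Type*} [Field K] (ea eb : K) (ha : ea * ea = 1) (hb : eb * eb = 1) :
    chiAlg ea eb ha hb (MonoidAlgebra.of K (DihedralGroup 0) (DihedralGroup.sr 0)) = ea := by
  rw [chiAlg, MonoidAlgebra.lift_of]
  show ea * (ea * eb) ^ (0 : ℤ) = ea
  rw [zpow_zero, mul_one]

theorem chiAlg_b {K : Type*} [Field K] (ea eb : K) (ha : ea * ea = 1) (hb : eb * eb = 1) :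
    chiAlg ea eb ha hb (MonoidAlgebra.of K (DihedralGroup 0) (DihedralGroup.sr 1)) = eb := by
  rw [chiAlg, MonoidAlgebra.lift_of]
  show ea * (ea * eb) ^ (1 : ℤ) = eb
  rw [zpow_one, ← mul_assoc, ha, one_mul]

/-- For idempotents `x, y` in a ring `R`, a ring hom `χ : R → K` into a commutative ring
with `χ x ≠ χ y` obstructs an isomorphism of the right ideals `xR` and `yR`. -/
theorem key {R K : Type*} [Ring R] [CommRing K] (χ : R →+* K) (x y : R)
    (hx : x * x = x) (hy : y * y = y) (hχ : χ x ≠ χ y) :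
    IsEmpty ((Submodule.span Rᵐᵒᵖ ({x} : Set R)) ≃ₗ[Rᵐᵒᵖ]
      (Submodule.span Rᵐᵒᵖ ({y} : Set R))) := by
  constructor
  intro φ
  have hxm : x ∈ Submodule.span Rᵐᵒᵖ ({x} : Set R) := Submodule.mem_span_singleton_self x
  have hym : y ∈ Submodule.span Rᵐᵒᵖ ({y} : Set R) := Submodule.mem_span_singleton_self y
  set u : R := (φ ⟨x, hxm⟩ : R) with hu
  set w : R := (φ.symm ⟨y, hym⟩ : R) with hw
  have humem : u ∈ Submodule.span Rᵐᵒᵖ ({y} : Set R) := (φ ⟨x, hxm⟩).2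
  obtain ⟨s, hs⟩ := Submodule.mem_span_singleton.mp humem
  have hyu : y * u = u := by
    rw [← hs]; show y * (y * s.unop) = y * s.unop; rw [← mul_assoc, hy]
  have hwmem : w ∈ Submodule.span Rᵐᵒᵖ ({x} : Set R) := (φ.symm ⟨y, hym⟩).2
  obtain ⟨t, ht⟩ := Submodule.mem_span_singleton.mp hwmem
  have hxw : x * w = w := by
    rw [← ht]; show x * (x * t.unop) = x * t.unop; rw [← mul_assoc, hx]
  have h1 : y = u * w := by
    have heq : (⟨w, hwmem⟩ : Submodule.span Rᵐᵒᵖ ({x} : Set R)) =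
        MulOpposite.op w • ⟨x, hxm⟩ := by
      ext; exact hxw.symm
    have h2 : φ ⟨w, hwmem⟩ = MulOpposite.op w • φ ⟨x, hxm⟩ := by
      rw [heq, map_smul]
    have h3 : φ ⟨w, hwmem⟩ = ⟨y, hym⟩ := by
      have heq2 : (⟨w, hwmem⟩ : Submodule.span Rᵐᵒᵖ ({x} : Set R)) = φ.symm ⟨y, hym⟩ := by
        ext; rfl
      rw [heq2, φ.apply_symm_apply]
    have h4 := h3 ▸ h2
    have h5 := congrArg Subtype.val h4
    simpa using h5
  have h4 : x = w * u := by
    have heq : (⟨u, humem⟩ : Submodule.span Rᵐᵒᵖ ({y} : Set R)) =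
        MulOpposite.op u • ⟨y, hym⟩ := by
      ext; exact hyu.symm
    have h2 : φ.symm ⟨u, humem⟩ = MulOpposite.op u • φ.symm ⟨y, hym⟩ := by
      rw [heq, map_smul]
    have h3 : φ.symm ⟨u, humem⟩ = ⟨x, hxm⟩ := by
      have heq2 : (⟨u, humem⟩ : Submodule.span Rᵐᵒᵖ ({y} : Set R)) = φ ⟨x, hxm⟩ := by
        ext; rfl
      rw [heq2, φ.symm_apply_apply]
    have h4 := h3 ▸ h2
    have h5 := congrArg Subtype.val h4
    simpa using h5
  apply hχ
  rw [h4, h1, map_mul, map_mul, mul_comm]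

theorem stmt_11 (K : Type*) [Field K] (hK : ringChar K ≠ 2) :
    let R := MonoidAlgebra K (DihedralGroup 0)
    let a : R := MonoidAlgebra.of K (DihedralGroup 0) (DihedralGroup.sr 0)
    let b : R := MonoidAlgebra.of K (DihedralGroup 0) (DihedralGroup.sr 1)
    let e : R := (2 : K)⁻¹ • (1 - a)
    let e' : R := (2 : K)⁻¹ • (1 - b)
    ∀ x ∈ ({e, 1 - e, e', 1 - e'} : Set R), ∀ y ∈ ({e, 1 - e, e', 1 - e'} : Set R),
      x ≠ y →
      IsEmpty ((Submodule.span Rᵐᵒᵖ ({x} : Set R)) ≃ₗ[Rᵐᵒᵖ]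
        (Submodule.span Rᵐᵒᵖ ({y} : Set R))) := by
  intro R a b e e' x hx y hy hxy
  have two : (2 : K) ≠ 0 := Ring.two_ne_zero hK
  -- square roots of 1
  have h1 : (1 : K) * 1 = 1 := one_mul 1
  have hm1 : (-1 : K) * (-1) = 1 := by ring
  -- a² = b² = 1
  have haa : a * a = 1 := by
    show MonoidAlgebra.of K (DihedralGroup 0) _ * MonoidAlgebra.of K (DihedralGroup 0) _ = 1
    rw [← map_mul]
    norm_num [DihedralGroup.sr_mul_sr]
    exact MonoidAlgebra.one_def.symm
  have hbb : b * b = 1 := by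
    show MonoidAlgebra.of K (DihedralGroup 0) _ * MonoidAlgebra.of K (DihedralGroup 0) _ = 1
    rw [← map_mul]
    norm_num [DihedralGroup.sr_mul_sr]
    exact MonoidAlgebra.one_def.symm
  -- idempotency
  have idem : ∀ c : R, c * c = 1 → ((2:K)⁻¹ • (1 - c)) * ((2:K)⁻¹ • (1 - c)) =
      (2:K)⁻¹ • (1 - c) := by
    intro c hc
    have h2 : (1 - c) * (1 - c) = (2 : K) • (1 - c) := by
      have : (1 - c) * (1 - c) = 1 - c - c + c * c := by simp only [sub_mul, mul_sub, one_mul, mul_one]; abel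
      rw [this, hc]
      rw [two_smul]
      noncomm_ring
    rw [smul_mul_assoc, mul_smul_comm, h2, smul_smul, smul_smul,
      inv_mul_cancel_right₀ two]
  have he : e * e = e := idem a haa
  have he' : e' * e' = e' := idem b hbb
  have idem' : ∀ c : R, c * c = c → (1 - c) * (1 - c) = 1 - c := by
    intro c hc
    have : (1 - c) * (1 - c) = 1 - c - c + c * c := by simp only [sub_mul, mul_sub, one_mul, mul_one]; abel
    rw [this, hc]; noncomm_ring
  have hf : (1 - e) * (1 - e) = 1 - e := idem' e he
  have hf' : (1 - e') * (1 - e') = 1 - e' := idem' e' he'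
  -- values of characters
  have chival : ∀ (ea eb : K) (ha' : ea * ea = 1) (hb' : eb * eb = 1),
      chiAlg ea eb ha' hb' e = (2:K)⁻¹ * (1 - ea) ∧
      chiAlg ea eb ha' hb' e' = (2:K)⁻¹ * (1 - eb) := by
    intro ea eb ha' hb'
    constructor
    · show chiAlg ea eb ha' hb' ((2:K)⁻¹ • (1 - a)) = _
      rw [map_smul, map_sub, map_one, chiAlg_a, smul_eq_mul]
    · show chiAlg ea eb ha' hb' ((2:K)⁻¹ • (1 - b)) = _
      rw [map_smul, map_sub, map_one, chiAlg_b, smul_eq_mul]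
  have v1 : (2:K)⁻¹ * (1 - 1) = 0 := by ring
  have vm1 : (2:K)⁻¹ * (1 - (-1)) = 1 := by
    rw [show (1:K) - (-1) = 2 by ring, inv_mul_cancel₀ two]
  -- helper to apply key with chosen character
  have apply_key : ∀ (ea eb : K) (ha' : ea * ea = 1) (hb' : eb * eb = 1) (u v : R),
      u * u = u → v * v = v →
      chiAlg ea eb ha' hb' u ≠ chiAlg ea eb ha' hb' v →
      IsEmpty ((Submodule.span Rᵐᵒᵖ ({u} : Set R)) ≃ₗ[Rᵐᵒᵖ]
        (Submodule.span Rᵐᵒᵖ ({v} : Set R))) := by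
    intro ea eb ha' hb' u v hu hv hne
    exact key (chiAlg ea eb ha' hb').toRingHom u v hu hv hne
  have zne : (0 : K) ≠ 1 := zero_ne_one
  rcases hx with rfl | rfl | rfl | rfl <;> rcases hy with rfl | rfl | rfl | rfl
  · exact absurd rfl hxy
  · -- e vs 1 - e : ea = -1
    apply apply_key (-1) 1 hm1 h1 _ _ he hf
    rw [(chival (-1) 1 hm1 h1).1, map_sub, map_one, (chival (-1) 1 hm1 h1).1, vm1]
    simpa using zne.symm
  · -- e vs e' : ea = -1, eb = 1
    apply apply_key (-1) 1 hm1 h1 _ _ he he'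
    rw [(chival (-1) 1 hm1 h1).1, (chival (-1) 1 hm1 h1).2, vm1, v1]
    exact zne.symm
  · -- e vs 1 - e' : ea = -1, eb = -1
    apply apply_key (-1) (-1) hm1 hm1 _ _ he hf'
    rw [(chival (-1) (-1) hm1 hm1).1, map_sub, map_one, (chival (-1) (-1) hm1 hm1).2, vm1]
    simpa using zne.symm
  · -- 1 - e vs e
    apply apply_key (-1) 1 hm1 h1 _ _ hf he
    rw [(chival (-1) 1 hm1 h1).1, map_sub, map_one, (chival (-1) 1 hm1 h1).1, vm1]
    simpa using zne
  · exact absurd rfl hxy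
  · -- 1 - e vs e' : ea = 1, eb = 1
    apply apply_key 1 1 h1 h1 _ _ hf he'
    rw [map_sub, map_one, (chival 1 1 h1 h1).1, (chival 1 1 h1 h1).2, v1]
    simpa using zne.symm
  · -- 1 - e vs 1 - e' : ea = 1, eb = -1
    apply apply_key 1 (-1) h1 hm1 _ _ hf hf'
    rw [map_sub, map_one, map_sub, map_one, (chival 1 (-1) h1 hm1).1,
      (chival 1 (-1) h1 hm1).2, v1, vm1]
    simpa using zne.symm
  · -- e' vs e : ea = 1, eb = -1
    apply apply_key 1 (-1) h1 hm1 _ _ he' he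
    rw [(chival 1 (-1) h1 hm1).1, (chival 1 (-1) h1 hm1).2, v1, vm1]
    exact zne.symm
  · -- e' vs 1 - e : ea = -1, eb = -1
    apply apply_key (-1) (-1) hm1 hm1 _ _ he' hf
    rw [map_sub, map_one, (chival (-1) (-1) hm1 hm1).1, (chival (-1) (-1) hm1 hm1).2, vm1]
    simpa using zne.symm
  · exact absurd rfl hxy
  · -- e' vs 1 - e' : eb = -1
    apply apply_key 1 (-1) h1 hm1 _ _ he' hf'
    rw [map_sub, map_one, (chival 1 (-1) h1 hm1).2, vm1]
    simpa using zne.symm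
  · -- 1 - e' vs e : ea = -1, eb = -1
    apply apply_key (-1) (-1) hm1 hm1 _ _ hf' he
    rw [map_sub, map_one, (chival (-1) (-1) hm1 hm1).1, (chival (-1) (-1) hm1 hm1).2, vm1]
    simpa using zne
  · -- 1 - e' vs 1 - e : ea = 1, eb = -1
    apply apply_key 1 (-1) h1 hm1 _ _ hf' hf
    rw [map_sub, map_one, map_sub, map_one, (chival 1 (-1) h1 hm1).1,
      (chival 1 (-1) h1 hm1).2, v1, vm1]
    simpa using zne
  · -- 1 - e' vs e' : eb = -1
    apply apply_key 1 (-1) h1 hm1 _ _ hf' he'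
    rw [map_sub, map_one, (chival 1 (-1) h1 hm1).2, vm1]
    simpa using zne
  · exact absurd rfl hxy
end

section
/- The idempotents e = (1-a)/2 and e' = (1-b)/2 of R = K D∞ are not conjugate by any unit of R (where K is a field of characteristic not 2). -/
open DihedralGroup in
private def negHom (K : Type*) [Field K] : DihedralGroup 0 →* K where
  toFun g := match g with
    | .r i => ((Int.negOnePow i : ℤˣ) : ℤ)
    | .sr i => ((Int.negOnePow i : ℤˣ) : ℤ)
  map_one' := by
    show ((Int.negOnePow (0:ℤ) : ℤˣ) : ℤ) = (1 : K)
    simp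
  map_mul' := by
    have hadd : ∀ i j : ℤ, ((Int.negOnePow (i + j) : ℤˣ) : ℤ) =
        (((Int.negOnePow i : ℤˣ) : ℤ) : K) * ((Int.negOnePow j : ℤˣ) : ℤ) := by
      intro i j; rw [Int.negOnePow_add]; push_cast; ring
    have hsub : ∀ i j : ℤ, ((Int.negOnePow (j - i) : ℤˣ) : ℤ) =
        (((Int.negOnePow i : ℤˣ) : ℤ) : K) * ((Int.negOnePow j : ℤˣ) : ℤ) := by
      intro i j; rw [Int.negOnePow_sub]; push_cast
      rcases Int.even_or_odd i with h | h
      · simp [Int.negOnePow_even i h]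
      · simp [Int.negOnePow_odd i h]
    rintro (i | i) (j | j) <;>
      simp only [r_mul_r, r_mul_sr, sr_mul_r, sr_mul_sr] <;>
      first
        | exact hadd i j
        | exact hsub i j

theorem stmt_14 (K : Type*) [Field K] (hK : ringChar K ≠ 2) :
    let R := MonoidAlgebra K (DihedralGroup 0)
    let a : R := MonoidAlgebra.of K (DihedralGroup 0) (DihedralGroup.sr 0)
    let b : R := MonoidAlgebra.of K (DihedralGroup 0) (DihedralGroup.sr 1)
    let e : R := (2 : K)⁻¹ • (1 - a)
    let e' : R := (2 : K)⁻¹ • (1 - b)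
    ¬ ∃ ν : Rˣ, (↑ν⁻¹ : R) * e * ν = e' := by
  intro R a b e e'
  rintro ⟨ν, hν⟩
  have h2 : (2 : K) ≠ 0 := Ring.two_ne_zero hK
  set φ : R →ₐ[K] K := MonoidAlgebra.lift K K (DihedralGroup 0) (negHom K) with hφ
  have hφa : φ a = 1 := by
    show φ (MonoidAlgebra.of K (DihedralGroup 0) (DihedralGroup.sr 0)) = 1
    rw [MonoidAlgebra.lift_of]
    show ((Int.negOnePow (0 : ℤ) : ℤˣ) : ℤ) = (1 : K)
    simp
  have hφb : φ b = -1 := by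
    show φ (MonoidAlgebra.of K (DihedralGroup 0) (DihedralGroup.sr 1)) = -1
    rw [MonoidAlgebra.lift_of]
    show ((Int.negOnePow (1 : ℤ) : ℤˣ) : ℤ) = (-1 : K)
    simp
  have he : φ e = 0 := by
    show φ ((2 : K)⁻¹ • (1 - a)) = 0
    rw [map_smul, map_sub, map_one, hφa]
    simp
  have he' : φ e' = 1 := by
    show φ ((2 : K)⁻¹ • (1 - b)) = 1
    rw [map_smul, map_sub, map_one, hφb]
    rw [sub_neg_eq_add, smul_eq_mul]
    field_simp
    norm_num
  have := congrArg φ hν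
  rw [map_mul, map_mul, he, he'] at this
  simp at this
end

section
/- Let K be a field of characteristic not 2 and A = K[t,t⁻¹] with involution h*(t) = h(t⁻¹). The image of the embedding ι : K D∞ → M₂(A) consists exactly of the matrices [[f, g*],[g, f*]] with f, g ∈ A; moreover, such a matrix squares to the identity if and only if f f* - g g* = -1 and f + f* = 0, or (f, g) = (±1, 0). -/
open LaurentPolynomial in
theorem stmt_17 (K : Type*) [Field K] (hK : ringChar K ≠ 2)
    (ι : MonoidAlgebra K (DihedralGroup 0) →ₐ[K]
        Matrix (Fin 2) (Fin 2) (LaurentPolynomial K))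
    (hι₁ : ∀ n : ZMod 0,
      ι (MonoidAlgebra.of K (DihedralGroup 0) (DihedralGroup.r n)) =
        !![T (n : ℤ), 0; 0, T (-(n : ℤ))])
    (hι₂ : ∀ n : ZMod 0,
      ι (MonoidAlgebra.of K (DihedralGroup 0) (DihedralGroup.sr n)) =
        !![0, T (-(n : ℤ)); T (n : ℤ), 0]) :
    (Set.range ι = {M | ∃ f g : LaurentPolynomial K,
        M = !![f, invert g; g, invert f]}) ∧
    (∀ f g : LaurentPolynomial K,
      (!![f, invert g; g, invert f] : Matrix (Fin 2) (Fin 2) (LaurentPolynomial K)) *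
          !![f, invert g; g, invert f] = 1 ↔
        (f * invert f - g * invert g = -1 ∧ f + invert f = 0) ∨
        (f = 1 ∧ g = 0) ∨ (f = -1 ∧ g = 0)) := by
  have key_add : ∀ (a b c d e f g h : LaurentPolynomial K),
      !![a,b;c,d] + !![e,f;g,h] = !![a+e, b+f; c+g, d+h] := by
    intros; ext i j; fin_cases i <;> fin_cases j <;> simp
  have key_smul : ∀ (r : K) (a b c d : LaurentPolynomial K),
      r • !![a,b;c,d] = !![r•a, r•b; r•c, r•d] := by
    intros; ext i j; fin_cases i <;> fin_cases j <;> simp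
  constructor
  · ext M
    simp only [Set.mem_range, Set.mem_setOf_eq]
    constructor
    · rintro ⟨x, rfl⟩
      induction x using MonoidAlgebra.induction_on with
      | of g =>
        cases g with
        | r n => exact ⟨T (n : ℤ), 0, by rw [hι₁ n]; simp; exact (invert_T _).symm⟩
        | sr n => exact ⟨0, T (n : ℤ), by rw [hι₂ n]; simp; exact (invert_T _).symm⟩
      | add x y hx hy =>
        obtain ⟨f1, g1, h1⟩ := hx
        obtain ⟨f2, g2, h2⟩ := hy
        exact ⟨f1 + f2, g1 + g2, by rw [map_add, h1, h2, key_add, map_add, map_add]⟩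
      | smul r x hx =>
        obtain ⟨f1, g1, h1⟩ := hx
        exact ⟨r • f1, r • g1, by rw [map_smul, h1, key_smul, map_smul, map_smul]⟩
    · rintro ⟨f, g, rfl⟩
      have claim1 : ∀ f : LaurentPolynomial K,
          ∃ x, ι x = !![f, 0; 0, invert f] := by
        intro f
        induction f using LaurentPolynomial.induction_on' with
        | add p q hp hq =>
          obtain ⟨x, hx⟩ := hp; obtain ⟨y, hy⟩ := hq
          exact ⟨x + y, by rw [map_add, hx, hy, key_add, map_add]; norm_num⟩
        | C_mul_T n a =>
          refine ⟨a • MonoidAlgebra.of K (DihedralGroup 0) (DihedralGroup.r (n : ZMod 0)), ?_⟩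
          rw [map_smul, hι₁ n, key_smul]
          have hs : ∀ z : LaurentPolynomial K, a • z = C a * z := fun z => by
            rw [C_eq_algebraMap, Algebra.smul_def]
          simp only [smul_zero, hs, map_mul, invert_C, invert_T, mul_zero]
          rfl
      have claim2 : ∀ g : LaurentPolynomial K,
          ∃ x, ι x = !![0, invert g; g, 0] := by
        intro g
        induction g using LaurentPolynomial.induction_on' with
        | add p q hp hq =>
          obtain ⟨x, hx⟩ := hp; obtain ⟨y, hy⟩ := hq
          exact ⟨x + y, by rw [map_add, hx, hy, key_add, map_add]; norm_num⟩
        | C_mul_T n a =>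
          refine ⟨a • MonoidAlgebra.of K (DihedralGroup 0) (DihedralGroup.sr (n : ZMod 0)), ?_⟩
          rw [map_smul, hι₂ n, key_smul]
          have hs : ∀ z : LaurentPolynomial K, a • z = C a * z := fun z => by
            rw [C_eq_algebraMap, Algebra.smul_def]
          simp only [smul_zero, hs, map_mul, invert_C, invert_T, mul_zero]
          rfl
      obtain ⟨x, hx⟩ := claim1 f
      obtain ⟨y, hy⟩ := claim2 g
      exact ⟨x + y, by rw [map_add, hx, hy, key_add]; norm_num⟩
  · intro f g
    rw [Matrix.mul_fin_two, Matrix.one_fin_two]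
    constructor
    · intro h
      rw [← Matrix.ext_iff] at h
      have h00 := h 0 0
      have h10 := h 1 0
      simp at h00 h10
      by_cases hg : g = 0
      · subst hg
        rw [map_zero, mul_zero, add_zero] at h00
        have hsq : (f - 1) * (f + 1) = 0 := by linear_combination h00
        rcases mul_eq_zero.1 hsq with h' | h'
        · exact Or.inr (Or.inl ⟨by linear_combination h', rfl⟩)
        · exact Or.inr (Or.inr ⟨by linear_combination h', rfl⟩)
      · left
        have hfs : f + invert f = 0 := by
          have hz : g * (f + invert f) = 0 := by linear_combination h10
          rcases mul_eq_zero.1 hz with h' | h'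
          · exact absurd h' hg
          · exact h'
        refine ⟨?_, hfs⟩
        linear_combination -h00 + f * hfs
    · rintro (⟨h1, h2⟩ | ⟨rfl, rfl⟩ | ⟨rfl, rfl⟩)
      · have e00 : f * f + invert g * g = 1 := by linear_combination -h1 + f * h2
        have e01 : f * invert g + invert g * invert f = 0 := by
          linear_combination invert g * h2
        have e10 : g * f + invert f * g = 0 := by linear_combination g * h2
        have e11 : g * invert g + invert f * invert f = 1 := by
          linear_combination -h1 + invert f * h2
        rw [e00, e01, e10, e11]
      · ext i j; fin_cases i <;> fin_cases j <;> simp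
      · ext i j; fin_cases i <;> fin_cases j <;> simp
end

section
/- Let K be an algebraically closed field of characteristic not 2 and let g ∈ K[t,t⁻¹] be nonzero. If g g* = p p* for some p ∈ K[t,t⁻¹] factored into primes p = δ tᵐ p₁⋯pₙ, then there exist γ ∈ K nonzero, l ∈ ℤ, and a subset I ⊆ {1,…,n} such that g = γ tˡ ∏_{i∈I} pᵢ ∏_{i∉I} pᵢ*, and γ² = δ². -/
open LaurentPolynomial

open Polynomial in
lemma laurent_isUnit {K : Type*} [Field K] {u : LaurentPolynomial K} (hu : IsUnit u) :
    ∃ (γ : K) (l : ℤ), γ ≠ 0 ∧ u = LaurentPolynomial.C γ * T l := by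
  obtain ⟨n, f, hf⟩ := u.exists_T_pow
  obtain ⟨v, hv⟩ := hu.exists_right_inv
  obtain ⟨k, f', hf'⟩ := v.exists_T_pow
  have hfh : f * f' = X ^ (n + k) := by
    apply Polynomial.toLaurent_injective
    rw [map_mul, hf, hf', Polynomial.toLaurent_X_pow]
    rw [show u * T (n:ℤ) * (v * T (k:ℤ)) = (u*v) * (T (n:ℤ) * T (k:ℤ)) by ring, hv, one_mul]
    push_cast [T_add]
    rfl
  have hdvd : f ∣ X ^ (n + k) := ⟨f', hfh.symm⟩
  obtain ⟨i, hi, hassoc⟩ := (dvd_prime_pow Polynomial.prime_X (n + k)).mp hdvd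
  obtain ⟨w, hw⟩ := hassoc.symm
  obtain ⟨r, hr, hrw⟩ := Polynomial.isUnit_iff.mp w.isUnit
  refine ⟨r, (i : ℤ) - n, hr.ne_zero, ?_⟩
  · have hu' : u = Polynomial.toLaurent f * T (-(n:ℤ)) := by
      rw [hf, mul_T_assoc, add_neg_cancel, T_zero, mul_one]
    have : f = Polynomial.C r * X ^ i := by rw [← hw, ← hrw]; ring
    rw [hu', this, Polynomial.toLaurent_C_mul_X_pow, mul_T_assoc, sub_eq_add_neg]

lemma laurent_main {K : Type*} [Field K] : ∀ (n : ℕ) (g : LaurentPolynomial K), g ≠ 0 →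
    ∀ (p : Fin n → LaurentPolynomial K), (∀ i, Prime (p i)) → ∀ (δ : K), δ ≠ 0 → ∀ (m : ℤ),
    g * invert g =
      (LaurentPolynomial.C δ * T m * ∏ i, p i) * invert (LaurentPolynomial.C δ * T m * ∏ i, p i) →
    ∃ (γ : K) (l : ℤ) (I : Finset (Fin n)),
      γ ≠ 0 ∧ γ ^ 2 = δ ^ 2 ∧
      g = LaurentPolynomial.C γ * T l * (∏ i ∈ I, p i) * ∏ i ∈ Iᶜ, invert (p i) := by
  intro n
  induction n with
  | zero =>
    intro g hg p hp δ hδ m h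
    have hC : g * invert g = LaurentPolynomial.C (δ ^ 2) := by
      rw [h]
      simp only [Finset.univ_eq_empty, Finset.prod_empty, mul_one, map_mul, invert_C, invert_T]
      rw [show LaurentPolynomial.C δ * T m * (LaurentPolynomial.C δ * T (-m)) =
        (LaurentPolynomial.C δ * LaurentPolynomial.C δ) * (T m * T (-m)) by ring,
        ← T_add, add_neg_cancel, T_zero, mul_one, ← map_mul, ← sq]
    have hunit : IsUnit g := by
      apply isUnit_of_mul_isUnit_left (y := invert g)
      rw [hC]
      exact (isUnit_iff_ne_zero.mpr (pow_ne_zero 2 hδ)).map (LaurentPolynomial.C (R := K))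
    obtain ⟨γ, l, hγ, hgl⟩ := laurent_isUnit hunit
    refine ⟨γ, l, ∅, hγ, ?_, by simp [hgl]⟩
    have : LaurentPolynomial.C (γ ^ 2) = LaurentPolynomial.C (δ ^ 2) := by
      rw [← hC, hgl]
      simp only [map_mul, invert_C, invert_T]
      rw [show LaurentPolynomial.C γ * T l * (LaurentPolynomial.C γ * T (-l)) =
        (LaurentPolynomial.C γ * LaurentPolynomial.C γ) * (T l * T (-l)) by ring,
        ← T_add, add_neg_cancel, T_zero, mul_one, ← map_mul, ← sq]
    exact (LaurentPolynomial.C (R := K)).injective this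
  | succ n ih =>
    intro g hg p hp δ hδ m h
    have hinv0 : ∀ x : LaurentPolynomial K, invert x = 0 ↔ x = 0 := fun x =>
      EmbeddingLike.map_eq_zero_iff
    have hinvol : ∀ x : LaurentPolynomial K, invert (invert x) = x := involutive_invert
    have key : p 0 * invert (p 0) ≠ 0 :=
      mul_ne_zero (hp 0).ne_zero (fun e => (hp 0).ne_zero ((hinv0 _).mp e))
    set P' : LaurentPolynomial K := LaurentPolynomial.C δ * T m * ∏ i : Fin n, p i.succ with hP'
    have hsplit : (LaurentPolynomial.C δ * T m * ∏ i, p i) *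
        invert (LaurentPolynomial.C δ * T m * ∏ i, p i) =
        (p 0 * invert (p 0)) * (P' * invert P') := by
      rw [Fin.prod_univ_succ]
      simp only [map_mul, hP']
      ring
    have hdvd : p 0 ∣ g * invert g := by
      rw [h, hsplit]
      exact dvd_mul_of_dvd_left (dvd_mul_right (p 0) (invert (p 0))) _
    rcases (hp 0).2.2 _ _ hdvd with hd | hd
    · obtain ⟨g', hgeq⟩ := hd
      have hg' : g' ≠ 0 := by rintro rfl; simp at hgeq; exact hg hgeq
      have hcancel : g' * invert g' = P' * invert P' := by
        apply mul_left_cancel₀ key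
        rw [← hsplit, ← h, hgeq, map_mul]
        ring
      obtain ⟨γ, l, I, hγ, hγδ, hgl⟩ := ih g' hg' (fun i => p i.succ) (fun i => hp i.succ) δ hδ m hcancel
      refine ⟨γ, l, insert 0 (I.map (Fin.succEmb n)), hγ, hγδ, ?_⟩
      have h0 : (0 : Fin (n+1)) ∉ I.map (Fin.succEmb n) := by
        simp [Fin.coe_succEmb, Fin.succ_ne_zero]
      have hcompl : (insert 0 (I.map (Fin.succEmb n)))ᶜ = Iᶜ.map (Fin.succEmb n) := by
        ext x
        induction x using Fin.cases with
        | zero => simp [Fin.coe_succEmb, Fin.succ_ne_zero]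
        | succ i => simp [Fin.coe_succEmb, Fin.succ_ne_zero, Fin.succ_injective _ |>.eq_iff]
      rw [Finset.prod_insert h0, hcompl, Finset.prod_map, Finset.prod_map]
      simp only [Fin.coe_succEmb]
      rw [hgeq, hgl]
      ring
    · have hd' : invert (p 0) ∣ g := by
        obtain ⟨c, hc⟩ := hd
        exact ⟨invert c, by rw [← hinvol g, hc, map_mul]⟩
      obtain ⟨g', hgeq⟩ := hd'
      have hg' : g' ≠ 0 := by rintro rfl; simp at hgeq; exact hg hgeq
      have hcancel : g' * invert g' = P' * invert P' := by
        apply mul_left_cancel₀ key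
        rw [← hsplit, ← h, hgeq, map_mul, hinvol]
        ring
      obtain ⟨γ, l, I, hγ, hγδ, hgl⟩ := ih g' hg' (fun i => p i.succ) (fun i => hp i.succ) δ hδ m hcancel
      refine ⟨γ, l, I.map (Fin.succEmb n), hγ, hγδ, ?_⟩
      have h0 : (0 : Fin (n+1)) ∉ (Iᶜ).map (Fin.succEmb n) := by
        simp [Fin.coe_succEmb, Fin.succ_ne_zero]
      have hcompl : (I.map (Fin.succEmb n))ᶜ = insert 0 (Iᶜ.map (Fin.succEmb n)) := by
        ext x
        induction x using Fin.cases with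
        | zero => simp [Fin.coe_succEmb, Fin.succ_ne_zero]
        | succ i => simp [Fin.coe_succEmb, Fin.succ_ne_zero, Fin.succ_injective _ |>.eq_iff]
      rw [hcompl, Finset.prod_insert h0, Finset.prod_map, Finset.prod_map]
      simp only [Fin.coe_succEmb]
      rw [hgeq, hgl]
      ring

open LaurentPolynomial in
theorem stmt_18 (K : Type*) [Field K] [IsAlgClosed K] (hK : ringChar K ≠ 2)
    (g : LaurentPolynomial K) (hg : g ≠ 0)
    (n : ℕ) (p : Fin n → LaurentPolynomial K) (hp : ∀ i, Prime (p i))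
    (δ : K) (hδ : δ ≠ 0) (m : ℤ) (P : LaurentPolynomial K)
    (hP : P = C δ * T m * ∏ i, p i)
    (h : g * invert g = P * invert P) :
    ∃ (γ : K) (l : ℤ) (I : Finset (Fin n)),
      γ ≠ 0 ∧ γ ^ 2 = δ ^ 2 ∧
      g = C γ * T l * (∏ i ∈ I, p i) * ∏ i ∈ Iᶜ, invert (p i) := by
  subst hP
  obtain ⟨γ, l, I, h1, h2, h3⟩ := laurent_main n g hg p hp δ hδ m h
  exact ⟨γ, l, I, h1, h2, h3⟩
end

section
/- In the group algebra R = K D∞ over an algebraically closed field K of characteristic not 2, the elements 1, -1, a, -a, b, -b are pairwise non-conjugate involutions. -/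
open scoped Classical

open DihedralGroup

noncomputable def phiAux {K : Type*} [CommSemiring K] {G : Type*} (p : G → Prop) :
    MonoidAlgebra K G →ₗ[K] K :=
  (Finsupp.lsum K fun g => if p g then (LinearMap.id : K →ₗ[K] K) else 0) ∘ₗ
    (MonoidAlgebra.coeffLinearEquiv K : MonoidAlgebra K G ≃ₗ[K] (G →₀ K)).toLinearMap

lemma phiAux_single {K : Type*} [CommSemiring K] {G : Type*} (p : G → Prop)
    (g : G) (c : K) :
    phiAux p (MonoidAlgebra.single g c) = if p g then c else 0 := by
  show Finsupp.lsum K (fun g : G => if p g then (LinearMap.id : K →ₗ[K] K) else 0)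
      (Finsupp.single g c) = _
  rw [Finsupp.lsum_single]
  by_cases h : p g <;> simp [h]

lemma phiAux_mul_comm {K : Type*} [CommSemiring K] {G : Type*} [Monoid G] (p : G → Prop)
    (hp : ∀ g h : G, p (g * h) ↔ p (h * g)) (x y : MonoidAlgebra K G) :
    phiAux p (x * y) = phiAux p (y * x) := by
  rw [MonoidAlgebra.mul_def, MonoidAlgebra.mul_def, map_finsuppSum, map_finsuppSum]
  simp only [map_finsuppSum, phiAux_single]
  rw [Finsupp.sum_comm]
  refine Finsupp.sum_congr fun h _ => Finsupp.sum_congr fun g _ => ?_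
  simp [hp g h, mul_comm]

lemma phiAux_conj {K : Type*} [CommSemiring K] {G : Type*} [Monoid G] (p : G → Prop)
    (hp : ∀ g h : G, p (g * h) ↔ p (h * g)) (ν : (MonoidAlgebra K G)ˣ)
    (x : MonoidAlgebra K G) :
    phiAux p ((↑ν⁻¹ : MonoidAlgebra K G) * x * (↑ν : MonoidAlgebra K G)) = phiAux p x := by
  rw [phiAux_mul_comm p hp ((↑ν⁻¹ : MonoidAlgebra K G) * x) (↑ν : MonoidAlgebra K G), ← mul_assoc,
    Units.mul_inv, one_mul]

theorem stmt_19 (K : Type*) [Field K] [IsAlgClosed K] (hK : ringChar K ≠ 2) :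
    let R := MonoidAlgebra K (DihedralGroup 0)
    let a : R := MonoidAlgebra.of K (DihedralGroup 0) (DihedralGroup.sr 0)
    let b : R := MonoidAlgebra.of K (DihedralGroup 0) (DihedralGroup.sr 1)
    (∀ x ∈ ({1, -1, a, -a, b, -b} : Set R), x * x = 1) ∧
    (∀ x ∈ ({1, -1, a, -a, b, -b} : Set R), ∀ y ∈ ({1, -1, a, -a, b, -b} : Set R),
      x ≠ y → ¬ ∃ ν : Rˣ, (↑ν⁻¹ : R) * x * ν = y) := by
  intro R a b
  classical
  -- characteristic facts
  have hchar : (1 : K) ≠ -1 := by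
    intro h
    have h20 : (2 : K) = 0 := by
      have : (2 : K) = 1 + 1 := by norm_num
      rw [this]; linear_combination h
    have hdvd : ringChar K ∣ 2 := (ringChar.spec K 2).mp (by exact_mod_cast h20)
    rcases (Nat.dvd_prime Nat.prime_two).mp hdvd with h1 | h1
    · have := CharP.ringChar_ne_one (R := K)
      exact this h1
    · exact hK h1
  have hchar' : (-1 : K) ≠ 1 := fun h => hchar h.symm
  -- the three class predicates
  set f : ZMod 0 →+* ZMod 2 := ZMod.castHom (dvd_zero 2) (ZMod 2) with hf
  set p1 : DihedralGroup 0 → Prop := fun g => g = 1 with hp1def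
  set p2 : DihedralGroup 0 → Prop :=
    fun g => match g with | DihedralGroup.r _ => False | DihedralGroup.sr i => f i = 0 with hp2def
  set p3 : DihedralGroup 0 → Prop :=
    fun g => match g with | DihedralGroup.r _ => False | DihedralGroup.sr i => f i = 1 with hp3def
  have hp1 : ∀ g h : DihedralGroup 0, p1 (g * h) ↔ p1 (h * g) := by
    intro g h
    simp only [hp1def]
    constructor <;> intro e
    · rw [mul_eq_one_iff_inv_eq] at e; rw [← e]; simp
    · rw [mul_eq_one_iff_inv_eq] at e; rw [← e]; simp
  have hsub : ∀ i j : ZMod 0, f (i - j) = f i + f j := by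
    intro i j
    rw [map_sub, CharTwo.sub_eq_add]
  have hp2 : ∀ g h : DihedralGroup 0, p2 (g * h) ↔ p2 (h * g) := by
    intro g h
    rcases g with i | i <;> rcases h with j | j <;>
      simp [hp2def, DihedralGroup.r_mul_r, DihedralGroup.r_mul_sr, DihedralGroup.sr_mul_r,
        DihedralGroup.sr_mul_sr, hsub, map_add, add_comm]
  have hp3 : ∀ g h : DihedralGroup 0, p3 (g * h) ↔ p3 (h * g) := by
    intro g h
    rcases g with i | i <;> rcases h with j | j <;>
      simp [hp3def, DihedralGroup.r_mul_r, DihedralGroup.r_mul_sr, DihedralGroup.sr_mul_r,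
        DihedralGroup.sr_mul_sr, hsub, map_add, add_comm]
  -- values of the invariants
  have e1 : (1 : R) = MonoidAlgebra.single (1 : DihedralGroup 0) (1 : K) := rfl
  have ea : a = MonoidAlgebra.single (DihedralGroup.sr (0 : ZMod 0)) (1 : K) := rfl
  have eb : b = MonoidAlgebra.single (DihedralGroup.sr (1 : ZMod 0)) (1 : K) := rfl
  have hsr_ne_one : ∀ i : ZMod 0, DihedralGroup.sr i ≠ 1 := by
    intro i h
    rw [DihedralGroup.one_def] at h
    exact (by cases h)
  have v11 : phiAux p1 (1 : R) = 1 := by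
    rw [e1, phiAux_single, if_pos]; simp [hp1def]
  have v1a : phiAux p1 a = 0 := by
    rw [ea, phiAux_single, if_neg]; simp [hp1def, hsr_ne_one]
  have v1b : phiAux p1 b = 0 := by
    rw [eb, phiAux_single, if_neg]; simp [hp1def, hsr_ne_one]
  have v21 : phiAux p2 (1 : R) = 0 := by
    rw [e1, phiAux_single, if_neg]
    rw [DihedralGroup.one_def]; simp [hp2def, -DihedralGroup.r_zero]
  have v2a : phiAux p2 a = 1 := by
    rw [ea, phiAux_single, if_pos]; simp [hp2def]
  have v2b : phiAux p2 b = 0 := by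
    rw [eb, phiAux_single, if_neg]; simp [hp2def]
  have v31 : phiAux p3 (1 : R) = 0 := by
    rw [e1, phiAux_single, if_neg]
    rw [DihedralGroup.one_def]; simp [hp3def, -DihedralGroup.r_zero]
  have v3a : phiAux p3 a = 0 := by
    rw [ea, phiAux_single, if_neg]; simp [hp3def]
  have v3b : phiAux p3 b = 1 := by
    rw [eb, phiAux_single, if_pos]; simp [hp3def]
  constructor
  · intro x hx
    have ha : a * a = 1 := by
      show (MonoidAlgebra.of K (DihedralGroup 0)) (DihedralGroup.sr 0) *
        (MonoidAlgebra.of K (DihedralGroup 0)) (DihedralGroup.sr 0) = 1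
      rw [← map_mul, DihedralGroup.sr_mul_self, map_one]
    have hb : b * b = 1 := by
      show (MonoidAlgebra.of K (DihedralGroup 0)) (DihedralGroup.sr 1) *
        (MonoidAlgebra.of K (DihedralGroup 0)) (DihedralGroup.sr 1) = 1
      rw [← map_mul, DihedralGroup.sr_mul_self, map_one]
    simp only [Set.mem_insert_iff, Set.mem_singleton_iff] at hx
    rcases hx with rfl | rfl | rfl | rfl | rfl | rfl
    · simp
    · exact (neg_mul_neg (1 : R) 1).trans (mul_one 1)
    · exact ha
    · exact (neg_mul_neg a a).trans ha
    · exact hb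
    · exact (neg_mul_neg b b).trans hb
  · rintro x hx y hy hxy ⟨ν, hν⟩
    have key : ∀ (p : DihedralGroup 0 → Prop), (∀ g h, p (g * h) ↔ p (h * g)) →
        phiAux p x = phiAux p y := by
      intro p hp
      rw [← hν, phiAux_conj p hp]
    have k1 := key p1 hp1
    have k2 := key p2 hp2
    have k3 := key p3 hp3
    clear key hν
    simp only [Set.mem_insert_iff, Set.mem_singleton_iff] at hx hy
    rcases hx with rfl | rfl | rfl | rfl | rfl | rfl <;>
      rcases hy with rfl | rfl | rfl | rfl | rfl | rfl <;>
      simp_all only [map_neg, v11, v1a, v1b, v21, v2a, v2b, v31, v3a, v3b, neg_zero, neg_neg,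
        ne_eq, not_true_eq_false, one_ne_zero, zero_ne_one, neg_eq_zero, zero_eq_neg] <;>
      first
        | exact hxy rfl
        | exact hchar k1 | exact hchar' k1 | exact hchar k2 | exact hchar' k2
        | exact hchar k3 | exact hchar' k3
end
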